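/- Let Λ ⊂ ℤ³ be the lattice of integer triples with even coordinate sum. For any x, y ∈ ℝ, the maximum over z ∈ ℝ of the ℓ¹-distance from (x,y,z) to Λ equals 1 + min(dist(x, ℤ), dist(y, ℤ)), where dist(t, ℤ) is the distance from t to the nearest integer. -/
import Mathlib

noncomputable def l1dist (v w : ℝ × ℝ × ℝ) : ℝ :=
  |v.1 - w.1| + |v.2.1 - w.2.1| + |v.2.2 - w.2.2|

noncomputable def distLambda (v : ℝ × ℝ × ℝ) : ℝ :=
  sInf { d | ∃ a b c : ℤ, Even (a + b + c) ∧ d = l1dist v ((a : ℝ), (b : ℝ), (c : ℝ)) }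

/-- Distance from a real number to the nearest integer. -/
noncomputable def distInt (t : ℝ) : ℝ := sInf { d | ∃ n : ℤ, d = |t - (n : ℝ)| }

lemma distInt_eq (t : ℝ) : distInt t = |t - round t| := by
  apply le_antisymm
  · exact csInf_le ⟨0, by rintro d ⟨n, rfl⟩; exact abs_nonneg _⟩ ⟨round t, rfl⟩
  · exact le_csInf ⟨_, round t, rfl⟩ (by rintro d ⟨n, rfl⟩; exact round_le t n)

/-- flip lemma: integer of different parity from round t is at distance ≥ 1 - d -/
lemma flip_lower (t : ℝ) (k : ℤ) (h : ¬ Even (k - round t)) :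
    1 - |t - round t| ≤ |t - (k : ℝ)| := by
  have hne : k - round t ≠ 0 := by
    intro hh; rw [hh] at h; exact h Even.zero
  have h1 : (1 : ℝ) ≤ |(k : ℝ) - (round t : ℝ)| := by
    have := Int.one_le_abs hne
    have h2 : ((1:ℤ):ℝ) ≤ ((|k - round t| : ℤ) : ℝ) := by exact_mod_cast this
    rwa [Int.cast_abs, Int.cast_sub, Int.cast_one] at h2
  have tri : |(k : ℝ) - (round t : ℝ)| ≤ |(k:ℝ) - t| + |t - round t| := abs_sub_le _ _ _
  have : |(k:ℝ) - t| = |t - k| := abs_sub_comm _ _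
  linarith

/-- other-side integer -/
lemma other_side (t : ℝ) : ∃ k : ℤ, ¬ Even (k - round t) ∧ |t - (k : ℝ)| ≤ 1 - |t - round t| := by
  have hb := abs_le.1 (abs_sub_round t)
  rcases le_or_gt (↑(round t)) t with h | h
  · refine ⟨round t + 1, by rw [Int.not_even_iff]; omega, ?_⟩
    push_cast
    rw [abs_of_nonpos (by linarith [hb.2]), abs_of_nonneg (by linarith)]
    linarith
  · refine ⟨round t - 1, by rw [Int.not_even_iff]; omega, ?_⟩
    push_cast
    rw [abs_of_nonneg (by linarith [hb.1]), abs_of_nonpos (by linarith)]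
    linarith

lemma even_dist_lower {M : ℝ} (hM0 : 0 ≤ M) (hM1 : M ≤ 1) (k : ℤ) (h : Even k) :
    M ≤ |M - (k : ℝ)| := by
  obtain ⟨j, rfl⟩ := h
  rcases le_or_gt j 0 with hj | hj
  · have : ((j + j : ℤ) : ℝ) ≤ 0 := by exact_mod_cast (by omega : (j + j : ℤ) ≤ 0)
    calc M ≤ M - ((j+j:ℤ):ℝ) := by linarith
    _ ≤ |M - ((j+j:ℤ):ℝ)| := le_abs_self _
  · have : (2:ℝ) ≤ ((j + j : ℤ) : ℝ) := by exact_mod_cast (by omega : (2:ℤ) ≤ j + j)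
    calc M ≤ ((j+j:ℤ):ℝ) - M := by linarith
    _ ≤ |M - ((j+j:ℤ):ℝ)| := by rw [abs_sub_comm]; exact le_abs_self _

lemma odd_dist_lower {M : ℝ} (hM0 : 0 ≤ M) (hM1 : M ≤ 1) (k : ℤ) (h : ¬ Even k) :
    1 - M ≤ |M - (k : ℝ)| := by
  rcases le_or_gt 1 k with hj | hj
  · have : (1:ℝ) ≤ (k : ℝ) := by exact_mod_cast hj
    calc 1 - M ≤ (k:ℝ) - M := by linarith
    _ ≤ |M - (k:ℝ)| := by rw [abs_sub_comm]; exact le_abs_self _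
  · have hk : k ≤ -1 := by
      rw [Int.not_even_iff] at h; omega
    have : ((k:ℤ):ℝ) ≤ -1 := by exact_mod_cast hk
    calc 1 - M ≤ M - (k:ℝ) := by linarith
    _ ≤ |M - (k:ℝ)| := le_abs_self _

lemma distLambda_bddBelow (v : ℝ × ℝ × ℝ) :
    BddBelow { d | ∃ a b c : ℤ, Even (a + b + c) ∧ d = l1dist v ((a : ℝ), (b : ℝ), (c : ℝ)) } := by
  refine ⟨0, ?_⟩
  rintro d ⟨a, b, c, _, rfl⟩
  unfold l1dist
  positivity

lemma distLambda_le (x y z : ℝ) (a b c : ℤ) (h : Even (a + b + c)) :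
    distLambda (x, y, z) ≤ |x - a| + |y - b| + |z - c| := by
  apply csInf_le (distLambda_bddBelow _)
  exact ⟨a, b, c, h, rfl⟩

lemma upper (x y z : ℝ) :
    distLambda (x, y, z) ≤ 1 + min |x - round x| |y - round y| := by
  set dx := |x - round x| with hdx
  set dy := |y - round y| with hdy
  set dz := |z - round z| with hdz
  have hx2 := abs_sub_round x
  have hy2 := abs_sub_round y
  have hz2 := abs_sub_round z
  have hx0 : 0 ≤ dx := abs_nonneg _
  have hy0 : 0 ≤ dy := abs_nonneg _
  have hz0 : 0 ≤ dz := abs_nonneg _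
  by_cases h : Even (round x + round y + round z)
  · have := distLambda_le x y z (round x) (round y) (round z) h
    have hmin : min dx dy ≤ dx := min_le_left _ _
    rcases le_total dx dy with hle | hle
    · have : distLambda (x,y,z) ≤ dx + dy + dz := this
      have hm : min dx dy = dx := min_eq_left hle
      linarith
    · have hm : min dx dy = dy := min_eq_right hle
      linarith
  · rcases le_total (max dx dy) dz with hcase | hcase
    · -- flip z
      obtain ⟨c1, hc1p, hc1d⟩ := other_side z
      have hpar : Even (round x + round y + c1) := by
        rw [Int.not_even_iff] at hc1p h
        rw [Int.even_iff]; omega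
      have hle := distLambda_le x y z (round x) (round y) c1 hpar
      have hmaxx : dx ≤ max dx dy := le_max_left _ _
      have hmaxy : dy ≤ max dx dy := le_max_right _ _
      have : dx + dy = min dx dy + max dx dy := (min_add_max dx dy).symm
      linarith
    · -- flip the coordinate with max d
      rcases le_total dy dx with hle | hle
      · obtain ⟨a1, ha1p, ha1d⟩ := other_side x
        have hpar : Even (a1 + round y + round z) := by
          rw [Int.not_even_iff] at ha1p h
          rw [Int.even_iff]; omega
        have h3 := distLambda_le x y z a1 (round y) (round z) hpar
        have hm : min dx dy = dy := min_eq_right hle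
        have hmax : max dx dy = dx := max_eq_left hle
        rw [hm]
        have hd2 : |y - round y| ≥ 0 := abs_nonneg _
        linarith [hcase.trans_eq hmax]
      · obtain ⟨b1, hb1p, hb1d⟩ := other_side y
        have hpar : Even (round x + b1 + round z) := by
          rw [Int.not_even_iff] at hb1p h
          rw [Int.even_iff]; omega
        have h3 := distLambda_le x y z (round x) b1 (round z) hpar
        have hm : min dx dy = dx := min_eq_left hle
        have hmax : max dx dy = dy := max_eq_right hle
        rw [hm]
        linarith [hcase.trans_eq hmax]

theorem max_dist_eq_general (x y : ℝ) :
    sSup { d | ∃ z : ℝ, d = distLambda (x, y, z) } = 1 + min (distInt x) (distInt y) := by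
  rw [distInt_eq, distInt_eq]
  set dx := |x - round x| with hdx
  set dy := |y - round y| with hdy
  set M := max dx dy with hM
  set m := min dx dy with hm
  have hx2 := abs_sub_round x
  have hy2 := abs_sub_round y
  have hx0 : 0 ≤ dx := abs_nonneg _
  have hy0 : 0 ≤ dy := abs_nonneg _
  have hM0 : 0 ≤ M := le_trans hx0 (le_max_left _ _)
  have hM1 : M ≤ 1 := by
    rcases max_cases dx dy with ⟨h1, _⟩ | ⟨h1, _⟩ <;> rw [hM, h1] <;> linarith
  have hsum : dx + dy = m + M := (min_add_max dx dy).symm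
  -- the special z
  set n : ℤ := round x + round y + 1 with hn
  set z₀ : ℝ := (n : ℝ) + M with hz0
  have hub : ∀ d ∈ { d | ∃ z : ℝ, d = distLambda (x, y, z) }, d ≤ 1 + m := by
    rintro d ⟨z, rfl⟩; exact upper x y z
  apply le_antisymm
  · exact csSup_le ⟨distLambda (x, y, 0), 0, rfl⟩ hub
  · have hlow : 1 + m ≤ distLambda (x, y, z₀) := by
      apply le_csInf
      · refine ⟨l1dist (x,y,z₀) ((0:ℤ),(0:ℤ),(0:ℤ)), 0, 0, 0, by simp, by norm_num⟩
      rintro d ⟨a, b, c, hev, rfl⟩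
      show 1 + m ≤ |x - a| + |y - b| + |z₀ - c|
      have hz0c : z₀ - (c:ℝ) = M - ((c - n : ℤ) : ℝ) := by push_cast; ring
      rcases Int.even_or_odd (c - n) with hce | hco
      · -- z cost ≥ M; xy: parity of a+b differs from round x + round y
        have hzc : M ≤ |z₀ - (c:ℝ)| := by rw [hz0c]; exact even_dist_lower hM0 hM1 _ hce
        -- parity: a + b + (round x + round y) is odd
        have hpar : ¬ Even ((a - round x) + (b - round y)) := by
          rw [hn, Int.even_iff] at hce
          rw [Int.even_iff] at hev
          rw [Int.not_even_iff]; omega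
        -- exactly one of a-round x, b-round y is odd
        rcases Int.even_or_odd (a - round x) with ha | ha
        · have hb : ¬ Even (b - round y) := by
            intro hb; exact hpar (ha.add hb)
          have h1 : dx ≤ |x - a| := round_le x a
          have h2 : 1 - dy ≤ |y - b| := flip_lower y b hb
          have h5 : dy ≤ M := le_max_right dx dy
          have h6 : m ≤ dx := min_le_left dx dy
          linarith
        · have ha' : ¬ Even (a - round x) := Int.not_even_iff_odd.mpr ha
          have hb : Even (b - round y) := by
            rw [Int.odd_iff] at ha
            rw [Int.not_even_iff] at hpar
            rw [Int.even_iff]; omega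
          have h1 : 1 - dx ≤ |x - a| := flip_lower x a ha'
          have h2 : dy ≤ |y - b| := round_le y b
          have h5 : dx ≤ M := le_max_left dx dy
          have h6 : m ≤ dy := min_le_right dx dy
          linarith
      · -- z cost ≥ 1 - M; xy: same parity class
        have hzc : 1 - M ≤ |z₀ - (c:ℝ)| := by
          rw [hz0c]; exact odd_dist_lower hM0 hM1 _ (Int.not_even_iff_odd.mpr hco)
        have hpar : Even ((a - round x) + (b - round y)) := by
          rw [hn, Int.odd_iff] at hco
          rw [Int.even_iff] at hev
          rw [Int.even_iff]; omega
        have hxy : dx + dy ≤ |x - a| + |y - b| := by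
          rcases Int.even_or_odd (a - round x) with ha | ha
          · have h1 : dx ≤ |x - a| := round_le x a
            have h2 : dy ≤ |y - b| := round_le y b
            linarith
          · have hb : ¬ Even (b - round y) := by
              rw [Int.odd_iff] at ha
              rw [Int.even_iff] at hpar
              rw [Int.not_even_iff]; omega
            have h1 : 1 - dx ≤ |x - a| := flip_lower x a (Int.not_even_iff_odd.mpr ha)
            have h2 : 1 - dy ≤ |y - b| := flip_lower y b hb
            linarith
        linarith
    calc 1 + m ≤ distLambda (x, y, z₀) := hlow
    _ ≤ sSup { d | ∃ z : ℝ, d = distLambda (x, y, z) } :=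
        le_csSup ⟨1 + m, hub⟩ ⟨z₀, rfl⟩
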